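/- The class of all strict linear orders on an m-element set, viewed as concepts over ordered pairs, does not shatter any set of m pairs: for any set E of m ordered pairs of elements of an m-element set, some labeling of E is inconsistent with every strict linear order. -/
import Mathlib
open scoped Classical

/-- A concept class `C` shatters `Y` if every subset of `Y` is cut out by some concept. -/
def Shatters {α : Type*} (C : Set (Set α)) (Y : Set α) : Prop :=
  ∀ Z ⊆ Y, ∃ c ∈ C, Y ∩ c = Z

/-- The class of strict linear orders on `α`, viewed as concepts over ordered pairs. -/
def linearOrderClass (α : Type*) : Set (Set (α × α)) :=
  { c | ∃ r : α → α → Prop, Irreflexive r ∧ Transitive r ∧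
      (∀ a b : α, a ≠ b → r a b ∨ r b a) ∧ c = { p | r p.1 p.2 } }

section Aux
variable {α : Type*}

/-- Every endpoint of every edge has a second incident edge. -/
def DegCond (E : Finset (α × α)) : Prop :=
  ∀ p ∈ E, ∀ v, (v = p.1 ∨ v = p.2) → ∃ q ∈ E, q ≠ p ∧ (v = q.1 ∨ v = q.2)

noncomputable def nextState (E : Finset (α × α)) (s : α × (α × α)) : α × (α × α) :=
  if h : ∃ q, q ∈ E ∧ q ≠ s.2 ∧ (s.1 = q.1 ∨ s.1 = q.2) then
    ((if s.1 = h.choose.1 then h.choose.2 else h.choose.1), h.choose)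
  else s

noncomputable def walkSeq (E : Finset (α × α)) (s0 : α × (α × α)) : ℕ → α × (α × α)
  | 0 => s0
  | n + 1 => nextState E (walkSeq E s0 n)

def WInv (E : Finset (α × α)) (s : α × (α × α)) : Prop :=
  s.2 ∈ E ∧ (s.1 = s.2.1 ∨ s.1 = s.2.2)

lemma nextState_spec (E : Finset (α × α)) (hdeg : DegCond E) (s : α × (α × α))
    (hs : WInv E s) :
    WInv E (nextState E s) ∧ (nextState E s).2 ≠ s.2 ∧
      ((nextState E s).2 = (s.1, (nextState E s).1) ∨
       (nextState E s).2 = ((nextState E s).1, s.1)) := by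
  have h : ∃ q, q ∈ E ∧ q ≠ s.2 ∧ (s.1 = q.1 ∨ s.1 = q.2) := by
    obtain ⟨q, hq, hq2, hq3⟩ := hdeg s.2 hs.1 s.1 hs.2
    exact ⟨q, hq, hq2, hq3⟩
  obtain ⟨hq1, hq2, hq3⟩ := h.choose_spec
  rw [nextState, dif_pos h]
  rcases hq3 with h3 | h3
  · refine ⟨⟨hq1, ?_⟩, hq2, ?_⟩
    · simp [if_pos h3]
    · left; simp only [if_pos h3]; exact Prod.ext h3.symm rfl
  · by_cases he : s.1 = h.choose.1
    · refine ⟨⟨hq1, ?_⟩, hq2, ?_⟩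
      · simp [if_pos he]
      · left; simp only [if_pos he]; exact Prod.ext he.symm rfl
    · refine ⟨⟨hq1, ?_⟩, hq2, ?_⟩
      · simp [if_neg he]
      · right; simp only [if_neg he]; exact Prod.ext rfl h3.symm

lemma exists_cycle [Fintype α] (E : Finset (α × α)) (hne : E.Nonempty)
    (hloop : ∀ p ∈ E, p.1 ≠ p.2) (hswap : ∀ p ∈ E, p.swap ∉ E)
    (hdeg : DegCond E) :
    ∃ (a : ℕ → α) (s t : ℕ), s + 3 ≤ t ∧ a s = a t ∧
      (∀ i j, i < t → j < t → a i = a j → i = j) ∧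
      (∀ i, s ≤ i → i < t → ∃ p ∈ E, p = (a i, a (i + 1)) ∨ p = (a (i + 1), a i)) := by
  classical
  obtain ⟨e0, he0⟩ := hne
  set s0 : α × (α × α) := (e0.1, e0) with hs0
  set a : ℕ → α := fun n => (walkSeq E s0 n).1 with ha
  set e : ℕ → α × α := fun n => (walkSeq E s0 n).2 with he
  have hinv : ∀ n, WInv E (walkSeq E s0 n) := by
    intro n
    induction n with
    | zero => exact ⟨he0, Or.inl rfl⟩
    | succ n ih => exact (nextState_spec E hdeg _ ih).1
  have hstep : ∀ n, e (n + 1) ∈ E ∧ e (n + 1) ≠ e n ∧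
      (e (n + 1) = (a n, a (n + 1)) ∨ e (n + 1) = (a (n + 1), a n)) := by
    intro n
    have := nextState_spec E hdeg _ (hinv n)
    exact ⟨(this.1).1, this.2.1, this.2.2⟩
  have hni : ¬ Function.Injective (fun i : Fin (Fintype.card α + 1) => a i) := by
    intro hinj
    have := Fintype.card_le_of_injective _ hinj
    simp at this
  rw [Function.not_injective_iff] at hni
  obtain ⟨i, j, hij, hne'⟩ := hni
  have hP : ∃ m : ℕ, ∃ k < m, a k = a m := by
    rcases lt_or_gt_of_ne (fun h => hne' (Fin.ext h)) with h | h
    · exact ⟨j, i, h, hij⟩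
    · exact ⟨i, j, h, hij.symm⟩
  set t := Nat.find hP with ht
  obtain ⟨s, hst, hast⟩ := Nat.find_spec hP
  have hinj : ∀ i j, i < t → j < t → a i = a j → i = j := by
    intro i j hi hj hij
    by_contra hne2
    rcases lt_or_gt_of_ne hne2 with h | h
    · exact Nat.find_min hP hj ⟨i, h, hij⟩
    · exact Nat.find_min hP hi ⟨j, h, hij.symm⟩
  refine ⟨a, s, t, ?_, hast, hinj, ?_⟩
  · have h1 : s + 1 ≠ t := by
      intro h
      obtain ⟨hE, -, hor⟩ := hstep s
      have : a s = a (s + 1) := by rw [h]; exact hast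
      rcases hor with h' | h' <;>
        exact hloop _ hE (by rw [h']; simp [this])
    have h2 : s + 2 ≠ t := by
      intro h
      obtain ⟨hE1, -, hor1⟩ := hstep s
      obtain ⟨hE2, hne2, hor2⟩ := hstep (s + 1)
      have hss : a (s + 2) = a s := by rw [h]; exact hast.symm
      rcases hor1 with h' | h' <;> rcases hor2 with h'' | h''
      · exact hswap _ hE1 (by rw [h', Prod.swap]; rw [h''] at hE2; rw [hss] at hE2; exact hE2)
      · exact hne2 (by rw [h'', h', hss])
      · exact hne2 (by rw [h'', h', hss])
      · exact hswap _ hE2 (by rw [h'', Prod.swap, hss]; rw [h'] at hE1; exact hE1)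
    omega
  · intro i hsi hit
    obtain ⟨hE, -, hor⟩ := hstep i
    exact ⟨e (i + 1), hE, hor⟩

noncomputable def endpts (E : Finset (α × α)) : Finset α :=
  E.image Prod.fst ∪ E.image Prod.snd

lemma mem_endpts {E : Finset (α × α)} {v : α} :
    v ∈ endpts E ↔ ∃ p ∈ E, v = p.1 ∨ v = p.2 := by
  simp only [endpts, Finset.mem_union, Finset.mem_image]
  constructor
  · rintro (⟨p, hp, rfl⟩ | ⟨p, hp, rfl⟩)
    · exact ⟨p, hp, Or.inl rfl⟩
    · exact ⟨p, hp, Or.inr rfl⟩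
  · rintro ⟨p, hp, rfl | rfl⟩
    · exact Or.inl ⟨p, hp, rfl⟩
    · exact Or.inr ⟨p, hp, rfl⟩

lemma lemA : ∀ (n : ℕ) (E : Finset (α × α)), E.card ≤ n → E.Nonempty →
    (∀ p ∈ E, p.1 ≠ p.2) → (endpts E).card ≤ E.card →
    ∃ E' : Finset (α × α), E' ⊆ E ∧ E'.Nonempty ∧ DegCond E' := by
  intro n
  induction n with
  | zero =>
    intro E hcard hne _ _
    exact absurd (Finset.card_pos.mpr hne) (by omega)
  | succ n ih =>
    intro E hcard hne hloop hV
    by_cases hd : DegCond E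
    · exact ⟨E, le_refl E, hne, hd⟩
    · simp only [DegCond, not_forall] at hd
      obtain ⟨p, hp, v, hv, hbad⟩ := hd
      push_neg at hbad
      have hinc : ∀ q ∈ E, (v = q.1 ∨ v = q.2) → q = p := by
        intro q hq hvq
        by_contra hqp
        rcases hvq with h | h
        exacts [(hbad q hq hqp).1 h, (hbad q hq hqp).2 h]
      set E2 := E.erase p with hE2
      have hsub : E2 ⊆ E := Finset.erase_subset _ _
      have hcard2 : E2.card = E.card - 1 := Finset.card_erase_of_mem hp
      have hvE : v ∈ endpts E := mem_endpts.mpr ⟨p, hp, hv⟩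
      have hendsub : endpts E2 ⊆ (endpts E).erase v := by
        intro w hw
        obtain ⟨q, hq, hwq⟩ := mem_endpts.mp hw
        refine Finset.mem_erase.mpr ⟨?_, mem_endpts.mpr ⟨q, hsub hq, hwq⟩⟩
        intro hvw
        exact (Finset.mem_erase.mp hq).1 (hinc q (hsub hq) (hvw ▸ hwq))
      have hEcard2 : 2 ≤ E.card := by
        have h2 : 1 < (endpts E).card := by
          rw [Finset.one_lt_card]
          exact ⟨p.1, mem_endpts.mpr ⟨p, hp, Or.inl rfl⟩,
            p.2, mem_endpts.mpr ⟨p, hp, Or.inr rfl⟩, hloop p hp⟩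
        omega
      have hne2 : E2.Nonempty := Finset.card_pos.mp (by omega)
      have hV2 : (endpts E2).card ≤ E2.card := by
        have := Finset.card_le_card hendsub
        rw [Finset.card_erase_of_mem hvE] at this
        omega
      obtain ⟨E', hE'1, hE'2, hE'3⟩ := ih E2 (by omega) hne2
        (fun q hq => hloop q (hsub hq)) hV2
      exact ⟨E', hE'1.trans hsub, hE'2, hE'3⟩

end Aux

/-- over an `m`-element set, the class of strict linear orders does not
shatter any set of `m` ordered pairs. -/
theorem stmt5 {α : Type*} [Fintype α] (hm : 1 ≤ Fintype.card α) :
    ∀ E : Finset (α × α), E.card = Fintype.card α →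
      ¬ Shatters (linearOrderClass α) ↑E := by
  intro E hcard hshat
  classical
  -- Reduction 1: no loops
  by_cases hloop : ∀ p ∈ E, p.1 ≠ p.2
  swap
  · push_neg at hloop
    obtain ⟨p, hp, hpeq⟩ := hloop
    obtain ⟨c, ⟨r, hirr, htr, htot, rfl⟩, hc⟩ :=
      hshat {p} (Set.singleton_subset_iff.mpr hp)
    have hpZ : p ∈ (↑E ∩ {p' : α × α | r p'.1 p'.2} : Set (α × α)) := by
      rw [hc]; exact rfl
    have h2 : r p.1 p.2 := hpZ.2
    rw [hpeq] at h2
    exact hirr p.2 h2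
  -- Reduction 2: no symmetric pairs
  by_cases hswap : ∀ p ∈ E, p.swap ∉ E
  swap
  · push_neg at hswap
    obtain ⟨p, hp, hps⟩ := hswap
    obtain ⟨c, ⟨r, hirr, htr, htot, rfl⟩, hc⟩ :=
      hshat {p, p.swap} (by
        intro q hq
        rcases hq with rfl | hq
        · exact hp
        · rw [Set.mem_singleton_iff] at hq; rw [hq]; exact hps)
    have h1 : p ∈ (↑E ∩ {p' : α × α | r p'.1 p'.2} : Set (α × α)) := by
      rw [hc]; exact Or.inl rfl
    have h2 : p.swap ∈ (↑E ∩ {p' : α × α | r p'.1 p'.2} : Set (α × α)) := by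
      rw [hc]; exact Or.inr rfl
    exact hirr p.1 (htr h1.2 h2.2)
  -- Main case
  have hEne : E.Nonempty := Finset.card_pos.mp (by omega)
  have hVcard : (endpts E).card ≤ E.card := by
    rw [hcard]
    exact le_trans (Finset.card_le_card (Finset.subset_univ _)) (by simp)
  obtain ⟨E', hE'sub, hE'ne, hE'deg⟩ := lemA E.card E le_rfl hEne hloop hVcard
  obtain ⟨a, s, t, hst3, hast, hinj, hsteps⟩ :=
    exists_cycle E' hE'ne (fun p hp => hloop p (hE'sub hp))
      (fun p hp hps => hswap p (hE'sub hp) (hE'sub hps)) hE'deg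
  set Z : Set (α × α) :=
    ↑E ∩ {p : α × α | ∃ i, s ≤ i ∧ i < t ∧ p = (a i, a (i + 1))} with hZ
  obtain ⟨c, ⟨r, hirr, htr, htot, rfl⟩, hc⟩ := hshat Z Set.inter_subset_left
  have hr : ∀ i, s ≤ i → i < t → r (a i) (a (i + 1)) := by
    intro i hsi hit
    obtain ⟨p, hpE', hp⟩ := hsteps i hsi hit
    have hpE : p ∈ E := hE'sub hpE'
    have hne_ab : a i ≠ a (i + 1) := by
      intro h
      by_cases h1 : i + 1 < t
      · have := hinj i (i + 1) hit h1 h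
        omega
      · have ht1 : i + 1 = t := by omega
        have : a i = a s := by rw [h, ht1, ← hast]
        have := hinj i s hit (by omega) this
        omega
    rcases hp with hp | hp
    · have hpZ : p ∈ Z := ⟨hpE, i, hsi, hit, hp⟩
      rw [← hc] at hpZ
      have := hpZ.2
      rw [hp] at this
      exact this
    · have hpnZ : p ∉ Z := by
        rintro ⟨-, j, hsj, hjt, hpj⟩
        rw [hp, Prod.mk.injEq] at hpj
        obtain ⟨hj1, hj2⟩ := hpj
        by_cases h1 : i + 1 < t
        · have hji : j = i + 1 := hinj j (i + 1) hjt h1 hj1.symm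
          subst hji
          by_cases h2 : i + 1 + 1 < t
          · have := hinj (i + 1 + 1) i h2 hit hj2.symm
            omega
          · have ht2 : i + 1 + 1 = t := by omega
            have : a i = a s := by rw [hj2, ht2, ← hast]
            have := hinj i s hit (by omega) this
            omega
        · have ht1 : i + 1 = t := by omega
          have : a j = a s := by rw [← hj1, ht1, ← hast]
          have hjs : j = s := hinj j s hjt (by omega) this
          have : i = s + 1 := hinj i (s + 1) hit (by omega) (by rw [hj2, hjs])
          omega
      have hpc : p ∉ (↑E ∩ {p' : α × α | r p'.1 p'.2} : Set (α × α)) := by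
        rw [hc]; exact hpnZ
      have hnr : ¬ r (a (i + 1)) (a i) := by
        intro hri
        exact hpc ⟨hpE, by rw [hp]; exact hri⟩
      rcases htot (a i) (a (i + 1)) hne_ab with h | h
      · exact h
      · exact absurd h hnr
  have hchain : ∀ d, s + d + 1 ≤ t → r (a s) (a (s + d + 1)) := by
    intro d
    induction d with
    | zero => intro h; exact hr s le_rfl (by omega)
    | succ d ih =>
      intro h
      exact htr (ih (by omega)) (hr (s + d + 1) (by omega) (by omega))
  have hfin : r (a s) (a t) := by
    have := hchain (t - s - 1) (by omega)
    rwa [show s + (t - s - 1) + 1 = t by omega] at this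
  exact hirr (a s) (hast ▸ hfin)
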